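/- Let A ∈ ℂ^{M×N_a} and B ∈ ℂ^{M×N_b} be matrices with unit ℓ²-norm columns, with coherences μ_a and μ_b respectively and mutual coherence μ_m. Suppose A p = B q for vectors p ∈ ℂ^{N_a} and q ∈ ℂ^{N_b}, not both zero, and let P = supp(p) and Q = supp(q). Then μ_m² · |P| · |Q| ≥ [1 − μ_a(|P|−1)]_+ · [1 − μ_b(|Q|−1)]_+. -/

import Mathlib

open scoped BigOperators ComplexConjugate
open Matrix

/-- Coherence of a matrix: max over distinct column pairs of |aₖᴴ aₗ| (0 if fewer than 2 columns). -/
noncomputable def coh {m n : Type*} [Fintype m] [Fintype n] (A : Matrix m n ℂ) : ℝ :=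
  ⨆ k, ⨆ l, ⨆ _ : k ≠ l, ‖∑ i, conj (A i k) * A i l‖

/-- Mutual coherence between two matrices: max over column pairs of |aₖᴴ bₗ|. -/
noncomputable def mcoh {m na nb : Type*} [Fintype m] [Fintype na] [Fintype nb]
    (A : Matrix m na ℂ) (B : Matrix m nb ℂ) : ℝ :=
  ⨆ k, ⨆ l, ‖∑ i, conj (A i k) * B i l‖

/-- All columns have unit ℓ²-norm. -/
def unitCols {m n : Type*} [Fintype m] (A : Matrix m n ℂ) : Prop :=
  ∀ k, ∑ i, ‖A i k‖ ^ 2 = 1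

/-- Number of nonzero entries of a vector. -/
noncomputable def l0 {n : Type*} (v : n → ℂ) : ℕ := {i | v i ≠ 0}.ncard

/-- ℓ¹ norm of a vector. -/
noncomputable def l1 {n : Type*} [Fintype n] (v : n → ℂ) : ℝ := ∑ i, ‖v i‖

/-- Squared ℓ² norm of a vector. -/
noncomputable def l2sq {n : Type*} [Fintype n] (v : n → ℂ) : ℝ := ∑ i, ‖v i‖ ^ 2

/-- Submatrix consisting of the columns with index in `E`. -/
def colsub {m n : Type*} (B : Matrix m n ℂ) (E : Finset n) : Matrix m {j // j ∈ E} ℂ :=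
  fun i j => B i j.val

/-- Orthogonal projector onto the orthogonal complement of the column span of `B_E`. -/
noncomputable def projC {m n : Type*} [Fintype m] [DecidableEq m] [DecidableEq n]
    (B : Matrix m n ℂ) (E : Finset n) : Matrix m m ℂ :=
  1 - colsub B E * ((colsub B E)ᴴ * colsub B E)⁻¹ * (colsub B E)ᴴ
-- helpers
private lemma conj_mul_self (z : ℂ) : conj z * z = ((‖z‖ : ℂ))^2 := by
  rw [Complex.conj_mul']

private lemma coh_nonneg' {m n : Type*} [Fintype m] [Fintype n] (A : Matrix m n ℂ) : 0 ≤ coh A :=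
  Real.iSup_nonneg fun _ => Real.iSup_nonneg fun _ => Real.iSup_nonneg fun _ => norm_nonneg _

private lemma norm_le_coh {m n : Type*} [Fintype m] [Fintype n]
    (A : Matrix m n ℂ) {k l : n} (hkl : k ≠ l) :
    ‖∑ i, conj (A i k) * A i l‖ ≤ coh A := by
  calc ‖∑ i, conj (A i k) * A i l‖
      = ⨆ _ : k ≠ l, ‖∑ i, conj (A i k) * A i l‖ :=
        (ciSup_pos (f := fun _ : k ≠ l => ‖∑ i, conj (A i k) * A i l‖) hkl).symm
    _ ≤ ⨆ l', ⨆ _ : k ≠ l', ‖∑ i, conj (A i k) * A i l'‖ :=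
        le_ciSup (f := fun l' => ⨆ _ : k ≠ l', ‖∑ i, conj (A i k) * A i l'‖)
          (Set.Finite.bddAbove (Set.finite_range _)) l
    _ ≤ coh A := le_ciSup (f := fun k' => ⨆ l', ⨆ _ : k' ≠ l', ‖∑ i, conj (A i k') * A i l'‖)
        (Set.Finite.bddAbove (Set.finite_range _)) k

private lemma norm_le_mcoh {m na nb : Type*} [Fintype m] [Fintype na] [Fintype nb]
    (A : Matrix m na ℂ) (B : Matrix m nb ℂ) (k : na) (l : nb) :
    ‖∑ i, conj (A i k) * B i l‖ ≤ mcoh A B := by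
  calc ‖∑ i, conj (A i k) * B i l‖
      ≤ ⨆ l', ‖∑ i, conj (A i k) * B i l'‖ :=
        le_ciSup (f := fun l' => ‖∑ i, conj (A i k) * B i l'‖)
          (Set.Finite.bddAbove (Set.finite_range _)) l
    _ ≤ mcoh A B := le_ciSup (f := fun k' => ⨆ l', ‖∑ i, conj (A i k') * B i l'‖)
        (Set.Finite.bddAbove (Set.finite_range _)) k

private lemma expand_sum {m na nb : Type*} [Fintype m] [Fintype na] [Fintype nb]
    (A : Matrix m na ℂ) (B : Matrix m nb ℂ) (p : na → ℂ) (q : nb → ℂ) :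
    ∑ i, conj (A.mulVec p i) * (B.mulVec q i)
      = ∑ k, ∑ l, conj (p k) * q l * ∑ i, conj (A i k) * B i l := by
  have h : ∀ i, conj (A.mulVec p i) * (B.mulVec q i)
      = ∑ k, ∑ l, conj (A i k) * conj (p k) * (B i l * q l) := by
    intro i
    simp only [mulVec, dotProduct, map_sum, _root_.map_mul, Finset.sum_mul, Finset.mul_sum]
    exact Finset.sum_comm
  rw [Finset.sum_congr rfl fun i _ => h i, Finset.sum_comm]
  refine Finset.sum_congr rfl fun k _ => ?_
  rw [Finset.sum_comm]
  refine Finset.sum_congr rfl fun l _ => ?_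
  rw [Finset.mul_sum]
  exact Finset.sum_congr rfl fun i _ => by ring

private lemma l1_def {n : Type*} [Fintype n] (v : n → ℂ) : l1 v = ∑ i, ‖v i‖ := rfl
private lemma l2sq_def {n : Type*} [Fintype n] (v : n → ℂ) : l2sq v = ∑ i, ‖v i‖ ^ 2 := rfl

private lemma l0_card {n : Type*} [Fintype n] (v : n → ℂ) [DecidablePred (fun i => v i ≠ 0)] :
    l0 v = (Finset.univ.filter (fun i => v i ≠ 0)).card := by
  rw [l0, ← Set.ncard_coe_finset]
  congr 1
  ext i
  simp only [Finset.coe_filter, Finset.mem_univ, true_and, Set.mem_setOf_eq]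

private lemma l1_sq_le {n : Type*} [Fintype n] (v : n → ℂ) :
    l1 v ^ 2 ≤ (l0 v : ℝ) * l2sq v := by
  classical
  set S := Finset.univ.filter (fun i => v i ≠ 0) with hS
  have hz : ∀ i ∈ Finset.univ \ S, ‖v i‖ = 0 := by
    intro i hi
    rw [Finset.mem_sdiff] at hi
    have hv : v i = 0 := by
      by_contra h
      exact hi.2 (Finset.mem_filter.mpr ⟨Finset.mem_univ i, h⟩)
    simp [hv]
  have h1 : l1 v = ∑ i ∈ S, ‖v i‖ := by
    rw [l1_def, ← Finset.sum_subset S.subset_univ]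
    intro i hi his
    exact hz i (Finset.mem_sdiff.mpr ⟨hi, his⟩)
  have h2 : l2sq v = ∑ i ∈ S, ‖v i‖ ^ 2 := by
    rw [l2sq_def, ← Finset.sum_subset S.subset_univ]
    intro i hi his
    rw [hz i (Finset.mem_sdiff.mpr ⟨hi, his⟩)]; ring
  have := Finset.sum_mul_sq_le_sq_mul_sq S (fun _ => 1) (fun i => ‖v i‖)
  simp only [one_mul, one_pow] at this
  rw [h1, h2, l0_card v]
  have hc : (∑ _i ∈ S, (1:ℝ)) = (S.card : ℝ) := by simp
  rw [hc] at this
  exact this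

private lemma l2sq_nonneg {n : Type*} [Fintype n] (v : n → ℂ) : 0 ≤ l2sq v :=
  Finset.sum_nonneg fun _ _ => sq_nonneg _

private lemma l1_nonneg {n : Type*} [Fintype n] (v : n → ℂ) : 0 ≤ l1 v :=
  Finset.sum_nonneg fun _ _ => norm_nonneg _

private lemma l2sq_pos {n : Type*} [Fintype n] {v : n → ℂ} (hv : v ≠ 0) : 0 < l2sq v := by
  obtain ⟨i, hi⟩ := Function.ne_iff.mp hv
  have h1 : (0:ℝ) < ‖v i‖ ^ 2 := pow_pos (norm_pos_iff.mpr hi) 2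
  exact lt_of_lt_of_le h1 (Finset.single_le_sum (fun j _ => sq_nonneg ‖v j‖) (Finset.mem_univ i))

private lemma quad_lower {m n : Type*} [Fintype m] [Fintype n]
    (A : Matrix m n ℂ) (hA : unitCols A) (v : n → ℂ) :
    (1 - coh A * ((l0 v : ℝ) - 1)) * l2sq v ≤ ∑ i, ‖A.mulVec v i‖ ^ 2 := by
  classical
  set X : ℝ := ∑ i, ‖A.mulVec v i‖ ^ 2 with hX
  set D : ℂ := ∑ k, ∑ l ∈ Finset.univ.erase k, conj (v k) * v l * ∑ i, conj (A i k) * A i l with hDdef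
  have hXc : ((X : ℝ) : ℂ) = ∑ k, ∑ l, conj (v k) * v l * ∑ i, conj (A i k) * A i l := by
    rw [← expand_sum, hX]
    push_cast
    exact Finset.sum_congr rfl fun i _ => (conj_mul_self _).symm
  have hGkk : ∀ k, (∑ i, conj (A i k) * A i k) = 1 := by
    intro k
    have h1 : (∑ i, conj (A i k) * A i k) = ((∑ i, ‖A i k‖^2 : ℝ) : ℂ) := by
      push_cast
      exact Finset.sum_congr rfl fun i _ => conj_mul_self _
    rw [h1, hA k]; norm_cast
  have hsplit : ((X : ℝ) : ℂ) = ((l2sq v : ℝ) : ℂ) + D := by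
    rw [hXc, hDdef]
    have : ∀ k : n, ∑ l, conj (v k) * v l * ∑ i, conj (A i k) * A i l
        = conj (v k) * v k * ∑ i, conj (A i k) * A i k
          + ∑ l ∈ Finset.univ.erase k, conj (v k) * v l * ∑ i, conj (A i k) * A i l :=
      fun k => (Finset.add_sum_erase _ _ (Finset.mem_univ k)).symm
    rw [Finset.sum_congr rfl fun k _ => this k, Finset.sum_add_distrib]
    congr 1
    rw [l2sq_def]; push_cast
    exact Finset.sum_congr rfl fun k _ => by rw [hGkk k, mul_one, conj_mul_self]
  have hDnorm : ‖D‖ ≤ coh A * (l1 v ^ 2 - l2sq v) := by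
    have hb : ‖D‖ ≤ ∑ k, ∑ l ∈ Finset.univ.erase k, ‖v k‖ * ‖v l‖ * coh A := by
      refine (norm_sum_le _ _).trans (Finset.sum_le_sum fun k _ => ?_)
      refine (norm_sum_le _ _).trans (Finset.sum_le_sum fun l hl => ?_)
      have hkl : k ≠ l := fun h => (Finset.mem_erase.mp hl).1 h.symm
      rw [norm_mul, norm_mul, RCLike.norm_conj]
      exact mul_le_mul_of_nonneg_left (norm_le_coh A hkl)
        (mul_nonneg (norm_nonneg _) (norm_nonneg _))
    refine hb.trans_eq ?_
    have : ∀ k : n, ∑ l ∈ Finset.univ.erase k, ‖v k‖ * ‖v l‖ * coh A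
        = coh A * (‖v k‖ * (l1 v - ‖v k‖)) := by
      intro k
      rw [← Finset.sum_mul, ← Finset.mul_sum, Finset.sum_erase_eq_sub (Finset.mem_univ k)]
      rw [← l1_def]; ring
    rw [Finset.sum_congr rfl fun k _ => this k, ← Finset.mul_sum]
    congr 1
    simp only [mul_sub]
    rw [Finset.sum_sub_distrib, ← Finset.sum_mul, ← l1_def, l2sq_def]
    have h9 : ∑ x, ‖v x‖ * ‖v x‖ = ∑ x, ‖v x‖ ^ 2 := Finset.sum_congr rfl fun x _ => by ring
    rw [h9]
    ring
  have habs : |X - l2sq v| ≤ coh A * (l1 v ^ 2 - l2sq v) := by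
    have : ((X - l2sq v : ℝ) : ℂ) = D := by push_cast; rw [hsplit]; ring
    have h7 : ‖((X - l2sq v : ℝ) : ℂ)‖ = |X - l2sq v| := by rw [Complex.norm_real, Real.norm_eq_abs]
    rw [← h7, this]
    exact hDnorm
  have h5 : l2sq v - coh A * (l1 v ^ 2 - l2sq v) ≤ X := by
    have := neg_abs_le (X - l2sq v)
    linarith
  have h6 := mul_le_mul_of_nonneg_left (l1_sq_le v) (coh_nonneg' A)
  nlinarith [l2sq_nonneg v, coh_nonneg' A]

private lemma quad_upper {m na nb : Type*} [Fintype m] [Fintype na] [Fintype nb]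
    (A : Matrix m na ℂ) (B : Matrix m nb ℂ) (p : na → ℂ) (q : nb → ℂ)
    (heq : A.mulVec p = B.mulVec q) :
    ∑ i, ‖A.mulVec p i‖ ^ 2 ≤ mcoh A B * (l1 p * l1 q) := by
  set X : ℝ := ∑ i, ‖A.mulVec p i‖ ^ 2 with hX
  have hX0 : 0 ≤ X := Finset.sum_nonneg fun _ _ => sq_nonneg _
  have hXc : ((X : ℝ) : ℂ) = ∑ k, ∑ l, conj (p k) * q l * ∑ i, conj (A i k) * B i l := by
    rw [← expand_sum, ← heq, hX]
    push_cast
    exact Finset.sum_congr rfl fun i _ => (conj_mul_self _).symm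
  have h1 : X = ‖((X:ℝ):ℂ)‖ := by
    rw [show ‖((X:ℝ):ℂ)‖ = |X| by rw [Complex.norm_real, Real.norm_eq_abs], abs_of_nonneg hX0]
  calc X = ‖((X:ℝ):ℂ)‖ := h1
    _ ≤ ∑ k, ∑ l, ‖p k‖ * ‖q l‖ * mcoh A B := by
        rw [hXc]
        refine (norm_sum_le _ _).trans (Finset.sum_le_sum fun k _ => ?_)
        refine (norm_sum_le _ _).trans (Finset.sum_le_sum fun l _ => ?_)
        rw [norm_mul, norm_mul, RCLike.norm_conj]
        exact mul_le_mul_of_nonneg_left (norm_le_mcoh A B k l)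
          (mul_nonneg (norm_nonneg _) (norm_nonneg _))
    _ = mcoh A B * (l1 p * l1 q) := by
        have h2 : ∀ k, ∑ l, ‖p k‖ * ‖q l‖ * mcoh A B
            = (∑ l, ‖p k‖ * ‖q l‖) * mcoh A B := fun k => (Finset.sum_mul _ _ _).symm
        rw [Finset.sum_congr rfl fun k _ => h2 k, ← Finset.sum_mul, ← Finset.sum_mul_sum]
        rw [l1_def, l1_def]; ring


/-- Uncertainty relation for perfectly concentrated (sparse) vectors (Corollary 1). -/
theorem uncertainty_relation_supports
    {M Na Nb : ℕ} (A : Matrix (Fin M) (Fin Na) ℂ) (B : Matrix (Fin M) (Fin Nb) ℂ)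
    (hA : unitCols A) (hB : unitCols B)
    (μa μb μm : ℝ) (hμa : μa = coh A) (hμb : μb = coh B) (hμm : μm = mcoh A B)
    (p : Fin Na → ℂ) (q : Fin Nb → ℂ) (hpq : ¬(p = 0 ∧ q = 0))
    (heq : A.mulVec p = B.mulVec q) :
    max (1 - μa * ((l0 p : ℝ) - 1)) 0 * max (1 - μb * ((l0 q : ℝ) - 1)) 0
      ≤ μm ^ 2 * (l0 p : ℝ) * (l0 q : ℝ) := by
  classical
  set X : ℝ := ∑ i, ‖A.mulVec p i‖ ^ 2 with hX
  have hX0 : 0 ≤ X := Finset.sum_nonneg fun _ _ => sq_nonneg _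
  have hXq : X = ∑ i, ‖B.mulVec q i‖ ^ 2 := by rw [hX, heq]
  have h1 : (1 - μa * ((l0 p:ℝ) - 1)) * l2sq p ≤ X := by
    rw [hμa, hX]; exact quad_lower A hA p
  have h2 : (1 - μb * ((l0 q:ℝ) - 1)) * l2sq q ≤ X := by
    rw [hμb, hXq]; exact quad_lower B hB q
  have h3 : X ≤ μm * (l1 p * l1 q) := by rw [hμm, hX]; exact quad_upper A B p q heq
  have hcp := l1_sq_le p
  have hcq := l1_sq_le q
  by_cases hp : p = 0
  · have hq : q ≠ 0 := fun h => hpq ⟨hp, h⟩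
    have hXz : X = 0 := by rw [hX, hp]; simp [Matrix.mulVec_zero]
    have hL2q : 0 < l2sq q := l2sq_pos hq
    have hbr : 1 - μb * ((l0 q:ℝ) - 1) ≤ 0 := by
      by_contra h
      push_neg at h
      nlinarith
    have hl0p : l0 p = 0 := by rw [hp]; simp [l0]
    rw [hl0p, max_eq_right hbr]
    simp
  · by_cases hq : q = 0
    · have hXz : X = 0 := by rw [hXq, hq]; simp [Matrix.mulVec_zero]
      have hL2p : 0 < l2sq p := l2sq_pos hp
      have hbr : 1 - μa * ((l0 p:ℝ) - 1) ≤ 0 := by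
        by_contra h
        push_neg at h
        nlinarith
      have hl0q : l0 q = 0 := by rw [hq]; simp [l0]
      rw [hl0q, max_eq_right hbr]
      simp
    · have hL2p : 0 < l2sq p := l2sq_pos hp
      have hL2q : 0 < l2sq q := l2sq_pos hq
      set a := max (1 - μa * ((l0 p:ℝ) - 1)) 0 with ha
      set b := max (1 - μb * ((l0 q:ℝ) - 1)) 0 with hb
      have hb0 : 0 ≤ b := le_max_right _ _
      have hap : a * l2sq p ≤ X := by
        rw [ha, max_mul_of_nonneg _ _ (l2sq_nonneg p)]
        exact max_le h1 (by simpa using hX0)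
      have hbq : b * l2sq q ≤ X := by
        rw [hb, max_mul_of_nonneg _ _ (l2sq_nonneg q)]
        exact max_le h2 (by simpa using hX0)
      have k1 : (a * l2sq p) * (b * l2sq q) ≤ X * X :=
        mul_le_mul hap hbq (mul_nonneg hb0 (l2sq_nonneg q)) hX0
      have k2 : X * X ≤ (μm * (l1 p * l1 q)) * (μm * (l1 p * l1 q)) :=
        mul_le_mul h3 h3 hX0 (hX0.trans h3)
      have k3 : (μm * (l1 p * l1 q)) * (μm * (l1 p * l1 q)) = μm^2 * (l1 p^2 * l1 q^2) := by
        ring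
      have k4 : μm^2 * (l1 p^2 * l1 q^2)
          ≤ μm^2 * (((l0 p:ℝ) * l2sq p) * ((l0 q:ℝ) * l2sq q)) := by
        refine mul_le_mul_of_nonneg_left ?_ (sq_nonneg μm)
        exact mul_le_mul hcp hcq (sq_nonneg _)
          (mul_nonneg (Nat.cast_nonneg _) (l2sq_nonneg p))
      have k5 : (a * b) * (l2sq p * l2sq q)
          ≤ (μm^2 * (l0 p:ℝ) * (l0 q:ℝ)) * (l2sq p * l2sq q) := by
        have e1 : (a * b) * (l2sq p * l2sq q) = (a * l2sq p) * (b * l2sq q) := by ring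
        have e2 : μm^2 * (((l0 p:ℝ) * l2sq p) * ((l0 q:ℝ) * l2sq q))
            = (μm^2 * (l0 p:ℝ) * (l0 q:ℝ)) * (l2sq p * l2sq q) := by ring
        rw [e1, ← e2]
        exact k1.trans ((k2.trans_eq k3).trans k4)
      exact le_of_mul_le_mul_right k5 (mul_pos hL2p hL2q)
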